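/- arXiv:1804.08430 — 7 statements merged into one kernel-verified Lean document; each statement's English description precedes it below -/
import Mathlib

section
/- For any compact metric spaces X and Y, there exists an optimal correspondence, i.e., a correspondence R between X and Y with d_GH(X,Y) = (1/2)·dis R. Moreover, such an R can be chosen closed in X × Y. -/
def IsCorrespondence {X Y : Type*} (R : Set (X × Y)) : Prop :=
  (∀ x : X, ∃ y : Y, (x, y) ∈ R) ∧ (∀ y : Y, ∃ x : X, (x, y) ∈ R)

noncomputable def distortion {X Y : Type*} [MetricSpace X] [MetricSpace Y]
    (σ : Set (X × Y)) : ℝ :=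
  sSup {d : ℝ | ∃ p ∈ σ, ∃ q ∈ σ, d = |dist p.1 q.1 - dist p.2 q.2|}

/-!
Embed `X` and `Y` isometrically by `f` and `g` into a common space where the Hausdorff distance
of the images is `d_GH(X, Y)`, and relate `x` to `y` when `dist (f x) (g y) ≤ d_GH(X, Y)`.
This relation is closed, it is a correspondence because nearest points exist in the compact
images, and the triangle inequality bounds its distortion by `2 d_GH(X, Y)`. Conversely, any
correspondence `R` lets one glue `X` and `Y` so that related points lie at distance
`dis R / 2 + δ`, whence `d_GH(X, Y) ≤ dis R / 2`.
-/

open Metric Set GromovHausdorff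

section Distortion

variable {X Y : Type*} [MetricSpace X] [MetricSpace Y]

lemma distortion_nonneg (σ : Set (X × Y)) : 0 ≤ distortion σ :=
  Real.sSup_nonneg <| by
    rintro _ ⟨p, -, q, -, rfl⟩
    exact abs_nonneg _

lemma distortion_le {σ : Set (X × Y)} {r : ℝ} (hr : 0 ≤ r)
    (h : ∀ p ∈ σ, ∀ q ∈ σ, |dist p.1 q.1 - dist p.2 q.2| ≤ r) : distortion σ ≤ r :=
  Real.sSup_le (by rintro _ ⟨p, hp, q, hq, rfl⟩; exact h p hp q hq) hr

lemma bddAbove_distortion_set [BoundedSpace X] [BoundedSpace Y] (σ : Set (X × Y)) :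
    BddAbove {d : ℝ | ∃ p ∈ σ, ∃ q ∈ σ, d = |dist p.1 q.1 - dist p.2 q.2|} := by
  refine ⟨diam (univ : Set X) + diam (univ : Set Y), ?_⟩
  rintro _ ⟨p, -, q, -, rfl⟩
  have hX := dist_le_diam_of_mem BoundedSpace.bounded_univ (mem_univ p.1) (mem_univ q.1)
  have hY := dist_le_diam_of_mem BoundedSpace.bounded_univ (mem_univ p.2) (mem_univ q.2)
  rw [abs_sub_le_iff]
  constructor <;> linarith [dist_nonneg (x := p.1) (y := q.1), dist_nonneg (x := p.2) (y := q.2)]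

lemma abs_dist_sub_dist_le_distortion [BoundedSpace X] [BoundedSpace Y] {σ : Set (X × Y)}
    {p q : X × Y} (hp : p ∈ σ) (hq : q ∈ σ) :
    |dist p.1 q.1 - dist p.2 q.2| ≤ distortion σ :=
  le_csSup (bddAbove_distortion_set σ) ⟨p, hp, q, hq, rfl⟩

end Distortion

lemma ghDist_le_distortion_div_two {X Y : Type*} [MetricSpace X] [CompactSpace X] [Nonempty X]
    [MetricSpace Y] [CompactSpace Y] [Nonempty Y] {R : Set (X × Y)} (hR : IsCorrespondence R) :
    ghDist X Y ≤ distortion R / 2 := by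
  obtain ⟨x₀⟩ := ‹Nonempty X›
  obtain ⟨y₀, hy₀⟩ := hR.1 x₀
  have : Nonempty R := ⟨⟨(x₀, y₀), hy₀⟩⟩
  -- The gluing distance only separates points when the gluing length `ε` is positive.
  refine le_of_forall_pos_le_add fun δ hδ => ?_
  obtain ⟨ε, hε_def⟩ : ∃ ε, ε = distortion R / 2 + δ := ⟨_, rfl⟩
  have hε : 0 < ε := by linarith [distortion_nonneg R, hε_def]
  have hdis (p q : R) : |dist p.1.1 q.1.1 - dist p.1.2 q.1.2| ≤ 2 * ε := by
    linarith [abs_dist_sub_dist_le_distortion p.2 q.2, hε_def]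
  let _ : MetricSpace (X ⊕ Y) :=
    glueMetricApprox (fun p : R => p.1.1) (fun p : R => p.1.2) ε hε hdis
  have hglued (x : X) (y : Y) (h : (x, y) ∈ R) : dist (Sum.inl x : X ⊕ Y) (Sum.inr y) = ε :=
    glueDist_glued_points (fun p : R => p.1.1) (fun p : R => p.1.2) ε ⟨(x, y), h⟩
  have hHausdorff : hausdorffDist (range (@Sum.inl X Y)) (range Sum.inr) ≤ ε := by
    refine hausdorffDist_le_of_mem_dist hε.le ?_ ?_
    · rintro _ ⟨x, rfl⟩
      obtain ⟨y, hy⟩ := hR.1 x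
      exact ⟨_, mem_range_self y, (hglued x y hy).le⟩
    · rintro _ ⟨y, rfl⟩
      obtain ⟨x, hx⟩ := hR.2 y
      exact ⟨_, mem_range_self x, (dist_comm _ _).trans_le (hglued x y hx).le⟩
  calc ghDist X Y ≤ hausdorffDist (range (@Sum.inl X Y)) (range Sum.inr) :=
        ghDist_le_hausdorffDist (Isometry.of_dist_eq fun _ _ => rfl)
          (Isometry.of_dist_eq fun _ _ => rfl)
    _ ≤ distortion R / 2 + δ := hHausdorff.trans_eq hε_def

section Coupling

variable {X Y Z : Type*} [MetricSpace Z]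

lemma exists_dist_le_of_hausdorffDist_le {s t : Set Z} {x : Z} {r : ℝ} (hx : x ∈ s)
    (ht : IsCompact t) (ht₀ : t.Nonempty) (hfin : hausdorffEDist s t ≠ ⊤)
    (h : hausdorffDist s t ≤ r) : ∃ y ∈ t, dist x y ≤ r := by
  obtain ⟨y, hy, hxy⟩ := ht.exists_infDist_eq_dist ht₀ x
  exact ⟨y, hy, hxy ▸ (infDist_le_hausdorffDist_of_mem hx hfin).trans h⟩

lemma isCorrespondence_setOf_dist_le [TopologicalSpace X] [CompactSpace X] [Nonempty X]
    [TopologicalSpace Y] [CompactSpace Y] [Nonempty Y] {f : X → Z} {g : Y → Z} {r : ℝ}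
    (hf : Continuous f) (hg : Continuous g) (h : hausdorffDist (range f) (range g) ≤ r) :
    IsCorrespondence {p : X × Y | dist (f p.1) (g p.2) ≤ r} := by
  have hfc := isCompact_range hf
  have hgc := isCompact_range hg
  have hfin : hausdorffEDist (range f) (range g) ≠ ⊤ :=
    hausdorffEDist_ne_top_of_nonempty_of_bounded (range_nonempty f) (range_nonempty g)
      hfc.isBounded hgc.isBounded
  constructor
  · intro x
    obtain ⟨_, ⟨y, rfl⟩, hxy⟩ :=
      exists_dist_le_of_hausdorffDist_le (mem_range_self x) hgc (range_nonempty g) hfin h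
    exact ⟨y, hxy⟩
  · intro y
    obtain ⟨_, ⟨x, rfl⟩, hyx⟩ := exists_dist_le_of_hausdorffDist_le (mem_range_self y) hfc
      (range_nonempty f) (hausdorffEDist_comm.trans_ne hfin)
      (hausdorffDist_comm.trans_le h)
    exact ⟨x, (dist_comm _ _).trans_le hyx⟩

lemma distortion_setOf_dist_le [MetricSpace X] [MetricSpace Y] {f : X → Z} {g : Y → Z} {r : ℝ}
    (hf : Isometry f) (hg : Isometry g) (hr : 0 ≤ r) :
    distortion {p : X × Y | dist (f p.1) (g p.2) ≤ r} ≤ 2 * r := by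
  refine distortion_le (by linarith) fun p hp q hq => ?_
  rw [← hf.dist_eq, ← hg.dist_eq, ← Real.dist_eq]
  calc dist (dist (f p.1) (f q.1)) (dist (g p.2) (g q.2))
      ≤ dist (f p.1) (g p.2) + dist (f q.1) (g q.2) := dist_dist_dist_le _ _ _ _
    _ ≤ 2 * r := by linarith [hp.out, hq.out]

end Coupling

theorem exists_optimal_correspondence {X Y : Type*} [MetricSpace X] [CompactSpace X] [Nonempty X]
    [MetricSpace Y] [CompactSpace Y] [Nonempty Y] :
    ∃ R : Set (X × Y), IsCorrespondence R ∧ IsClosed R ∧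
      GromovHausdorff.ghDist X Y = distortion R / 2 := by
  have hf := isometry_optimalGHInjl X Y
  have hg := isometry_optimalGHInjr X Y
  have hcorr := isCorrespondence_setOf_dist_le hf.continuous hg.continuous
    hausdorffDist_optimal.le
  refine ⟨_, hcorr, isClosed_le (by have := hf.continuous; have := hg.continuous; fun_prop)
    continuous_const, ?_⟩
  have hdis := distortion_setOf_dist_le hf hg (r := ghDist X Y) dist_nonneg
  linarith [ghDist_le_distortion_div_two hcorr]
end

section
/- The Gromov–Hausdorff metric on the space of isometry classes of nonempty compact metric spaces is strictly intrinsic: any two compact metric spaces X and Y are joined by a curve in the Gromov–Hausdorff space of length equal to d_GH(X,Y). -/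
/-!
Realize `p` and `q` as compact subsets `A`, `B` of `ℓ^∞` at Hausdorff distance `r = d_GH(p, q)`,
and let `R ⊆ A × B` be the compact set of pairs at distance at most `r`; every point of `A` and
every point of `B` occurs in some pair of `R`. Moving every pair of `R` along its segment gives
compact sets `C t = {(1 - t) a + t b | (a, b) ∈ R}` with `C 0 = A`, `C 1 = B` and
`d_H(C s, C t) ≤ |s - t| r`. Hence `t ↦ [C t]` is `r`-Lipschitz from `[A] = p` to `[B] = q`, and
the triangle inequality forces every such curve to be a geodesic.
-/

open GromovHausdorff Set Metric AffineMap TopologicalSpace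

section Geodesic

variable {α : Type*} [PseudoMetricSpace α]

theorem dist_eq_abs_sub_mul_of_dist_le {γ : ℝ → α}
    (hγ : ∀ s ∈ Icc (0 : ℝ) 1, ∀ t ∈ Icc (0 : ℝ) 1,
      dist (γ s) (γ t) ≤ |s - t| * dist (γ 0) (γ 1))
    {s t : ℝ} (hs : s ∈ Icc (0 : ℝ) 1) (ht : t ∈ Icc (0 : ℝ) 1) :
    dist (γ s) (γ t) = |s - t| * dist (γ 0) (γ 1) := by
  wlog hst : s ≤ t generalizing s t
  · rw [dist_comm, abs_sub_comm]
    exact this ht hs (le_of_not_ge hst)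
  have h0s := hγ 0 (left_mem_Icc.2 zero_le_one) s hs
  have ht1 := hγ t ht 1 (right_mem_Icc.2 zero_le_one)
  have hst' := hγ s hs t ht
  rw [zero_sub, abs_neg, abs_of_nonneg hs.1] at h0s
  rw [abs_of_nonpos (by linarith [ht.2])] at ht1
  rw [abs_of_nonpos (by linarith)] at hst' ⊢
  linarith [dist_triangle4 (γ 0) (γ s) (γ t) (γ 1)]

end Geodesic

section ClosePairs

variable {α : Type*} [PseudoMetricSpace α]

def closePairs (A B : Set α) : Set (α × α) :=
  {x | x ∈ A ×ˢ B ∧ dist x.1 x.2 ≤ hausdorffDist A B}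

theorem isCompact_closePairs {A B : Set α} (hA : IsCompact A) (hB : IsCompact B) :
    IsCompact (closePairs A B) :=
  (hA.prod hB).inter_right (isClosed_le (continuous_fst.dist continuous_snd) continuous_const)

theorem fst_image_closePairs {A B : Set α} (hB : IsCompact B)
    (hAB : hausdorffEDist A B ≠ ⊤) : Prod.fst '' closePairs A B = A := by
  refine Subset.antisymm (image_subset_iff.2 fun x hx => hx.1.1) fun a ha => ?_
  obtain ⟨b, hb, hab⟩ :=
    hB.exists_infDist_eq_dist (nonempty_of_hausdorffEDist_ne_top ⟨a, ha⟩ hAB) a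
  exact ⟨(a, b), ⟨⟨ha, hb⟩, hab ▸ infDist_le_hausdorffDist_of_mem ha hAB⟩, rfl⟩

theorem snd_image_closePairs {A B : Set α} (hA : IsCompact A)
    (hAB : hausdorffEDist A B ≠ ⊤) : Prod.snd '' closePairs A B = B := by
  rw [hausdorffEDist_comm] at hAB
  refine Subset.antisymm (image_subset_iff.2 fun x hx => hx.1.2) fun b hb => ?_
  obtain ⟨a, ha, hab⟩ :=
    hA.exists_infDist_eq_dist (nonempty_of_hausdorffEDist_ne_top ⟨b, hb⟩ hAB) b
  refine ⟨(a, b), ⟨⟨ha, hb⟩, ?_⟩, rfl⟩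
  rw [dist_comm, ← hab, hausdorffDist_comm]
  exact infDist_le_hausdorffDist_of_mem hb hAB

end ClosePairs

section Interpolation

variable {E : Type*} [NormedAddCommGroup E] [NormedSpace ℝ E]

def segmentInterpolation (R : Set (E × E)) (t : ℝ) : Set E :=
  (fun x : E × E => lineMap x.1 x.2 t) '' R

theorem segmentInterpolation_zero (R : Set (E × E)) :
    segmentInterpolation R 0 = Prod.fst '' R := by
  simp [segmentInterpolation]

theorem segmentInterpolation_one (R : Set (E × E)) :
    segmentInterpolation R 1 = Prod.snd '' R := by
  simp [segmentInterpolation]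

theorem IsCompact.segmentInterpolation {R : Set (E × E)} (hR : IsCompact R) (t : ℝ) :
    IsCompact (segmentInterpolation R t) :=
  hR.image (by fun_prop)

theorem hausdorffDist_segmentInterpolation_le {R : Set (E × E)} {r : ℝ} (hr : 0 ≤ r)
    (hR : ∀ x ∈ R, dist x.1 x.2 ≤ r) (s t : ℝ) :
    hausdorffDist (segmentInterpolation R s) (segmentInterpolation R t) ≤ |s - t| * r := by
  have key : ∀ u v : ℝ, ∀ y ∈ segmentInterpolation R u, ∃ z ∈ segmentInterpolation R v,
      dist y z ≤ |u - v| * r := by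
    rintro u v _ ⟨x, hx, rfl⟩
    refine ⟨_, mem_image_of_mem _ hx, ?_⟩
    rw [dist_lineMap_lineMap, Real.dist_eq]
    exact mul_le_mul_of_nonneg_left (hR x hx) (abs_nonneg _)
  exact hausdorffDist_le_of_mem_dist (by positivity) (key s t)
    fun y hy => abs_sub_comm s t ▸ key t s y hy

end Interpolation

theorem TopologicalSpace.NonemptyCompacts.toGHSpace_eq_of_eq_range {X E : Type*}
    [MetricSpace X] [CompactSpace X] [Nonempty X] [MetricSpace E] {Φ : X → E}
    (hΦ : Isometry Φ) {K : NonemptyCompacts E}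
    (hK : (K : Set E) = range Φ) : K.toGHSpace = GromovHausdorff.toGHSpace X :=
  toGHSpace_eq_toGHSpace_iff_isometryEquiv.2 <| by
    change Nonempty ((K : Set E) ≃ᵢ X)
    rw [hK]
    exact ⟨hΦ.isometryEquivOnRange.symm⟩

/-- The Gromov–Hausdorff metric is strictly intrinsic: any two points of the
Gromov–Hausdorff space are joined by a shortest curve (a geodesic) whose length
equals the distance between them. -/
theorem ghSpace_strictly_intrinsic (p q : GromovHausdorff.GHSpace) :
    ∃ γ : ℝ → GromovHausdorff.GHSpace, γ 0 = p ∧ γ 1 = q ∧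
      ∀ s ∈ Icc (0 : ℝ) 1, ∀ t ∈ Icc (0 : ℝ) 1,
        dist (γ s) (γ t) = |s - t| * dist p q := by
  obtain ⟨Φ, Ψ, hΦ, hΨ, hpq⟩ := ghDist_eq_hausdorffDist p.Rep q.Rep
  have hA : IsCompact (range Φ) := isCompact_range hΦ.continuous
  have hB : IsCompact (range Ψ) := isCompact_range hΨ.continuous
  have hAB : hausdorffEDist (range Φ) (range Ψ) ≠ ⊤ :=
    hausdorffEDist_ne_top_of_nonempty_of_bounded (range_nonempty _) (range_nonempty _)
      hA.isBounded hB.isBounded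
  set R := closePairs (range Φ) (range Ψ)
  have hR : R.Nonempty := Nonempty.of_image (f := Prod.fst) <|
    (fst_image_closePairs hB hAB).symm ▸ range_nonempty Φ
  let C (t : ℝ) : NonemptyCompacts _ :=
    ⟨⟨segmentInterpolation R t, (isCompact_closePairs hA hB).segmentInterpolation t⟩,
      hR.image _⟩
  let γ (t : ℝ) : GHSpace := (C t).toGHSpace
  have hγ0 : γ 0 = p := .trans (NonemptyCompacts.toGHSpace_eq_of_eq_range (K := C 0) hΦ
      ((segmentInterpolation_zero R).trans (fst_image_closePairs hB hAB))) p.toGHSpace_rep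
  have hγ1 : γ 1 = q := .trans (NonemptyCompacts.toGHSpace_eq_of_eq_range (K := C 1) hΨ
      ((segmentInterpolation_one R).trans (snd_image_closePairs hA hAB))) q.toGHSpace_rep
  have hLip : ∀ s ∈ Icc (0 : ℝ) 1, ∀ t ∈ Icc (0 : ℝ) 1,
      dist (γ s) (γ t) ≤ |s - t| * dist (γ 0) (γ 1) := by
    intro s _ t _
    rw [hγ0, hγ1, dist_ghDist p q, hpq]
    exact (ghDist_le_nonemptyCompacts_dist _ _).trans <|
      hausdorffDist_segmentInterpolation_le hausdorffDist_nonneg (fun x hx => hx.2) s t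
  refine ⟨γ, hγ0, hγ1, fun s hs t ht => ?_⟩
  simpa only [hγ0, hγ1] using dist_eq_abs_sub_mul_of_dist_le hLip hs ht
end

section
/- Let A = [0, 2r] ⊂ ℝ and B = {0, 2r} ⊂ ℝ with the induced metric, r > 0. Then the Gromov–Hausdorff distance between A and B equals r. -/
/-! Inside `ℝ` every point of `[0, 2r]` is within `r` of an endpoint, so `d_GH ≤ r`.
Conversely, if isometric copies of `[0, 2r]` and `{0, 2r}` in a common space were at Hausdorff
distance `< r`, the open `r`-balls around the images of `0` and `2r` would be disjoint, would
cover the connected copy of `[0, 2r]`, and would both meet it. -/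

open GromovHausdorff Set Metric

theorem Real.hausdorffDist_Icc_pair_le {a b : ℝ} (hab : a ≤ b) :
    hausdorffDist (Icc a b) {a, b} ≤ (b - a) / 2 := by
  refine hausdorffDist_le_of_infDist (by linarith) (fun x hx => ?_) (fun x hx => ?_)
  · rcases le_total x ((a + b) / 2) with hx' | hx'
    · calc infDist x {a, b} ≤ dist x a := infDist_le_dist_of_mem (mem_insert a {b})
        _ = x - a := by rw [Real.dist_eq, abs_of_nonneg (by linarith [hx.1])]
        _ ≤ (b - a) / 2 := by linarith
    · calc infDist x {a, b} ≤ dist x b := infDist_le_dist_of_mem (mem_insert_of_mem a rfl)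
        _ = b - x := by rw [Real.dist_eq, abs_of_nonpos (by linarith [hx.2]), neg_sub]
        _ ≤ (b - a) / 2 := by linarith
  · have hx' : x ∈ Icc a b := by
      rcases hx with rfl | rfl
      exacts [left_mem_Icc.2 hab, right_mem_Icc.2 hab]
    rw [infDist_zero_of_mem hx']
    linarith

theorem IsPreconnected.dist_le_two_mul_hausdorffDist_pair {Z : Type*} [PseudoMetricSpace Z]
    {S : Set Z} (hS : IsPreconnected S) {p q : Z} (hfin : hausdorffEDist S {p, q} ≠ ⊤) :
    dist p q ≤ 2 * hausdorffDist S {p, q} := by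
  by_contra! hlt
  set ε := dist p q / 2 with hε
  have hH : hausdorffDist S {p, q} < ε := by linarith
  have hcover : S ⊆ ball p ε ∪ ball q ε := by
    intro z hz
    obtain ⟨y, hy, hzy⟩ := exists_dist_lt_of_hausdorffDist_lt hz hH hfin
    rcases hy with rfl | rfl
    exacts [Or.inl hzy, Or.inr hzy]
  have hmeets : ∀ y ∈ ({p, q} : Set Z), (S ∩ ball y ε).Nonempty := fun y hy => by
    obtain ⟨z, hz, hzy⟩ := exists_dist_lt_of_hausdorffDist_lt' hy hH hfin
    exact ⟨z, hz, hzy⟩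
  obtain ⟨z, -, hzp, hzq⟩ := hS _ _ isOpen_ball isOpen_ball hcover
    (hmeets p (mem_insert p {q})) (hmeets q (mem_insert_of_mem p rfl))
  exact (ball_disjoint_ball (by linarith : ε + ε ≤ dist p q)).le_bot ⟨hzp, hzq⟩

theorem dist_le_two_mul_ghDist_of_preconnectedSpace {X Y : Type*} [MetricSpace X]
    [CompactSpace X] [Nonempty X] [PreconnectedSpace X] [MetricSpace Y] [CompactSpace Y]
    [Nonempty Y] {y₁ y₂ : Y} (hY : ∀ y, y = y₁ ∨ y = y₂) :
    dist y₁ y₂ ≤ 2 * ghDist X Y := by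
  set Φ := optimalGHInjl X Y
  set Ψ := optimalGHInjr X Y
  have hΦ : Isometry Φ := isometry_optimalGHInjl X Y
  have hΨ : Isometry Ψ := isometry_optimalGHInjr X Y
  have hrangeΨ : range Ψ = {Ψ y₁, Ψ y₂} := by
    ext z
    constructor
    · rintro ⟨y, rfl⟩
      rcases hY y with rfl | rfl
      exacts [mem_insert _ _, mem_insert_of_mem _ rfl]
    · rintro (rfl | rfl)
      exacts [mem_range_self _, mem_range_self _]
  have hfin : hausdorffEDist (range Φ) (range Ψ) ≠ ⊤ :=
    hausdorffEDist_ne_top_of_nonempty_of_bounded (range_nonempty _) (range_nonempty _)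
      (isCompact_range hΦ.continuous).isBounded (isCompact_range hΨ.continuous).isBounded
  rw [← hausdorffDist_optimal, ← hΨ.dist_eq]
  rw [hrangeΨ] at hfin ⊢
  exact (isPreconnected_range hΦ.continuous).dist_le_two_mul_hausdorffDist_pair hfin

theorem ghDist_Icc_pair (r : ℝ) (hr : 0 < r) :
    @GromovHausdorff.ghDist ↥(Set.Icc (0 : ℝ) (2 * r)) ↥({0, 2 * r} : Set ℝ) _
      (Set.Nonempty.to_subtype ⟨0, by constructor <;> nlinarith⟩)
      (isCompact_iff_compactSpace.mp isCompact_Icc) _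
      (Set.Nonempty.to_subtype ⟨0, by simp⟩)
      (isCompact_iff_compactSpace.mp ((Set.toFinite ({0, 2 * r} : Set ℝ)).isCompact)) = r := by
  have : Nonempty (Icc (0 : ℝ) (2 * r)) := ⟨⟨0, left_mem_Icc.2 (by linarith)⟩⟩
  have : Nonempty ({0, 2 * r} : Set ℝ) := ⟨⟨0, mem_insert _ _⟩⟩
  have : CompactSpace (Icc (0 : ℝ) (2 * r)) := isCompact_iff_compactSpace.mp isCompact_Icc
  have : CompactSpace ({0, 2 * r} : Set ℝ) :=
    isCompact_iff_compactSpace.mp (toFinite _).isCompact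
  have : PreconnectedSpace (Icc (0 : ℝ) (2 * r)) := Subtype.preconnectedSpace isPreconnected_Icc
  apply le_antisymm
  · calc ghDist (Icc (0 : ℝ) (2 * r)) ({0, 2 * r} : Set ℝ)
        ≤ hausdorffDist (Icc (0 : ℝ) (2 * r)) {0, 2 * r} := by
          simpa only [Subtype.range_coe] using ghDist_le_hausdorffDist
            (isometry_subtype_coe : Isometry ((↑) : Icc (0 : ℝ) (2 * r) → ℝ))
            (isometry_subtype_coe : Isometry ((↑) : ({0, 2 * r} : Set ℝ) → ℝ))
      _ ≤ (2 * r - 0) / 2 := Real.hausdorffDist_Icc_pair_le (by linarith)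
      _ = r := by ring
  · have hpair := dist_le_two_mul_ghDist_of_preconnectedSpace
      (X := Icc (0 : ℝ) (2 * r)) (Y := ({0, 2 * r} : Set ℝ)) (y₁ := ⟨0, mem_insert _ _⟩)
      (y₂ := ⟨2 * r, mem_insert_of_mem _ rfl⟩) (fun ⟨y, hy⟩ => by
        rcases hy with rfl | rfl
        exacts [Or.inl rfl, Or.inr rfl])
    rw [Subtype.dist_eq, Real.dist_eq, zero_sub, abs_neg, abs_of_pos (by linarith)] at hpair
    linarith
end

section
/- For r > 0, let A = [0,2r] and B = {0,2r} in ℝ, and for t ∈ [0,r] let C_t(A,B) = B_t(A) ∩ B_{r−t}(B), where B_s(S) denotes the closed s-neighborhood of S in ℝ. Then diam(C_{r/2}(A,B)) = 3r. -/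
open Metric Set

namespace Real

variable {s : Set ℝ} {a δ : ℝ}

lemma sub_mem_cthickening (ha : a ∈ s) (hδ : 0 ≤ δ) : a - δ ∈ cthickening δ s :=
  mem_cthickening_of_dist_le _ a _ _ ha (by simp [abs_of_nonneg hδ])

lemma add_mem_cthickening (ha : a ∈ s) (hδ : 0 ≤ δ) : a + δ ∈ cthickening δ s :=
  mem_cthickening_of_dist_le _ a _ _ ha (by simp [abs_of_nonneg hδ])

/-- The bound `diam (cthickening δ s) ≤ diam s + 2δ` is attained: `a - δ` and `b + δ`
lie in both neighbourhoods. -/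
theorem diam_cthickening_Icc_inter_cthickening_pair {a b δ : ℝ} (hab : a ≤ b) (hδ : 0 ≤ δ) :
    diam (cthickening δ (Icc a b) ∩ cthickening δ {a, b}) = b - a + 2 * δ := by
  apply le_antisymm
  · calc diam (cthickening δ (Icc a b) ∩ cthickening δ {a, b})
        ≤ diam (cthickening δ (Icc a b)) :=
          diam_mono inter_subset_left (isBounded_Icc a b).cthickening
      _ ≤ diam (Icc a b) + 2 * δ := diam_cthickening_le _ hδ
      _ = b - a + 2 * δ := by rw [diam_Icc hab]
  · have hleft : a - δ ∈ cthickening δ (Icc a b) ∩ cthickening δ {a, b} :=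
      ⟨sub_mem_cthickening (left_mem_Icc.2 hab) hδ, sub_mem_cthickening (by simp) hδ⟩
    have hright : b + δ ∈ cthickening δ (Icc a b) ∩ cthickening δ {a, b} :=
      ⟨add_mem_cthickening (right_mem_Icc.2 hab) hδ, add_mem_cthickening (by simp) hδ⟩
    have hbdd : Bornology.IsBounded (cthickening δ (Icc a b) ∩ cthickening δ {a, b}) :=
      (isBounded_Icc a b).cthickening.subset inter_subset_left
    calc b - a + 2 * δ = dist (a - δ) (b + δ) := by
          rw [dist_eq, abs_of_nonpos (by linarith)]; ring
      _ ≤ _ := dist_le_diam_of_mem hbdd hleft hright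

end Real

theorem diam_Cs_midpoint (r : ℝ) (hr : 0 < r) :
    Metric.diam (Metric.cthickening (r / 2) (Set.Icc (0 : ℝ) (2 * r)) ∩
      Metric.cthickening (r - r / 2) ({0, 2 * r} : Set ℝ)) = 3 * r := by
  rw [sub_half, Real.diam_cthickening_Icc_inter_cthickening_pair (by positivity) (by positivity)]
  ring
end

section
/- Let X be a proper (boundedly compact) metric space with strictly intrinsic metric, A, B nonempty compact subsets, r = d_H(A,B), and for s ∈ [0,r] let C_s(A,B) = B_s(A) ∩ B_{r−s}(B). Then s ↦ C_s(A,B) is a geodesic in the hyperspace of nonempty compact subsets with the Hausdorff metric: d_H(C_s(A,B), C_t(A,B)) = |s−t| for all s,t ∈ [0,r]. -/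
/-!
Write `r = d_H(A, B)` and `C s = B_s(A) ∩ B_{r-s}(B)`. Walking from a point of `C s` a distance
`t - s` along a geodesic towards a nearest point of `B` lands in `C t`; walking symmetrically
towards `A` shows `d_H(C s, C t) ≤ |s - t|`. Since `C 0 = A` and `C r = B`, the triangle
inequality `r ≤ d_H(C 0, C s) + d_H(C s, C t) + d_H(C t, C r)` forces equality.
-/

open Metric Set EMetric

/-- Equivalent to the metric being strictly intrinsic. -/
def IsGeodesicSpace (X : Type*) [PseudoMetricSpace X] : Prop :=
  ∀ x y : X, ∃ γ : ℝ → X, γ 0 = x ∧ γ 1 = y ∧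
    ∀ s ∈ Icc (0 : ℝ) 1, ∀ t ∈ Icc (0 : ℝ) 1, dist (γ s) (γ t) = |s - t| * dist x y

namespace IsGeodesicSpace

variable {X : Type*} [PseudoMetricSpace X]

theorem exists_dist_eq_of_le_dist (hX : IsGeodesicSpace X) {x z : X} {u : ℝ} (hu : 0 ≤ u)
    (huxz : u ≤ dist x z) : ∃ y, dist x y = u ∧ dist y z = dist x z - u := by
  obtain ⟨γ, hγ0, hγ1, hγ⟩ := hX x z
  rcases huxz.eq_or_lt with hu_eq | hu_lt
  · exact ⟨z, hu_eq.symm, by simp [hu_eq]⟩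
  have hd : 0 < dist x z := hu.trans_lt hu_lt
  have hc : u / dist x z ∈ Icc (0 : ℝ) 1 :=
    ⟨div_nonneg hu hd.le, (div_le_one hd).2 hu_lt.le⟩
  refine ⟨γ (u / dist x z), ?_, ?_⟩
  · have h := hγ 0 ⟨le_rfl, zero_le_one⟩ _ hc
    rwa [hγ0, zero_sub, abs_neg, abs_of_nonneg hc.1, div_mul_cancel₀ _ hd.ne'] at h
  · have h := hγ _ hc 1 ⟨zero_le_one, le_rfl⟩
    rwa [hγ1, abs_of_nonpos (sub_nonpos.2 hc.2), neg_sub, sub_mul, one_mul,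
      div_mul_cancel₀ _ hd.ne'] at h

theorem exists_dist_le_of_dist_le (hX : IsGeodesicSpace X) {x z : X} {q u : ℝ} (hu : 0 ≤ u)
    (huq : u ≤ q) (hxz : dist x z ≤ q) : ∃ y, dist x y ≤ u ∧ dist y z ≤ q - u := by
  rcases le_total (dist x z) u with hzu | huz
  · exact ⟨z, hzu, by simpa using huq⟩
  · obtain ⟨y, hxy, hyz⟩ := hX.exists_dist_eq_of_le_dist hu huz
    exact ⟨y, hxy.le, by linarith⟩

end IsGeodesicSpace

section HausdorffInterpolant

variable {X : Type*} [PseudoMetricSpace X]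

theorem IsGeodesicSpace.exists_mem_cthickening_inter_dist_le (hX : IsGeodesicSpace X)
    {A B : Set X} (hB : IsCompact B) {s q u : ℝ} (hs : 0 ≤ s) (hu : 0 ≤ u) (huq : u ≤ q) {x : X}
    (hx : x ∈ cthickening s A ∩ cthickening q B) :
    ∃ y ∈ cthickening (s + u) A ∩ cthickening (q - u) B, dist x y ≤ u := by
  rw [hB.cthickening_eq_biUnion_closedBall (hu.trans huq)] at hx
  obtain ⟨hxA, b, hb, hxb⟩ := by simpa only [mem_inter_iff, mem_iUnion₂] using hx
  obtain ⟨y, hxy, hyb⟩ := hX.exists_dist_le_of_dist_le hu huq (mem_closedBall.1 hxb)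
  refine ⟨y, ⟨?_, mem_cthickening_of_dist_le y b _ _ hb hyb⟩, hxy⟩
  rw [add_comm]
  exact cthickening_cthickening_subset hu hs A
    (mem_cthickening_of_dist_le y x _ _ hxA (dist_comm x y ▸ hxy))

/-- The set `C_s(A, B)` of the statement. -/
def hausdorffInterpolant (A B : Set X) (s : ℝ) : Set X :=
  cthickening s A ∩ cthickening (hausdorffDist A B - s) B

theorem hausdorffInterpolant_comm (A B : Set X) (s : ℝ) :
    hausdorffInterpolant A B s = hausdorffInterpolant B A (hausdorffDist A B - s) := by
  rw [hausdorffInterpolant, hausdorffInterpolant, hausdorffDist_comm, sub_sub_cancel, inter_comm]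

theorem hausdorffInterpolant_zero {A B : Set X} (hA : IsClosed A)
    (hAB : hausdorffEDist A B ≠ ⊤) : hausdorffInterpolant A B 0 = A := by
  rw [hausdorffInterpolant, cthickening_zero, hA.closure_eq, sub_zero, inter_eq_left]
  intro x hx
  rw [mem_cthickening_iff, hausdorffDist, ENNReal.ofReal_toReal hAB]
  exact infEDist_le_hausdorffEDist_of_mem hx

theorem hausdorffInterpolant_hausdorffDist {A B : Set X} (hB : IsClosed B)
    (hAB : hausdorffEDist A B ≠ ⊤) : hausdorffInterpolant A B (hausdorffDist A B) = B := by
  rw [hausdorffInterpolant_comm, sub_self,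
    hausdorffInterpolant_zero hB (hausdorffEDist_comm (s := A) ▸ hAB)]

theorem IsGeodesicSpace.exists_mem_hausdorffInterpolant_dist_le (hX : IsGeodesicSpace X)
    {A B : Set X} (hB : IsCompact B) {s t : ℝ} (hs : 0 ≤ s) (hst : s ≤ t)
    (ht : t ≤ hausdorffDist A B) {x : X} (hx : x ∈ hausdorffInterpolant A B s) :
    ∃ y ∈ hausdorffInterpolant A B t, dist x y ≤ t - s := by
  obtain ⟨y, hy, hxy⟩ :=
    hX.exists_mem_cthickening_inter_dist_le hB hs (sub_nonneg.2 hst) (by linarith) hx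
  rw [add_sub_cancel, sub_sub_sub_cancel_right] at hy
  exact ⟨y, hy, hxy⟩

theorem IsGeodesicSpace.hausdorffEDist_hausdorffInterpolant_le (hX : IsGeodesicSpace X)
    {A B : Set X} (hA : IsCompact A) (hB : IsCompact B) {s t : ℝ} (hs : 0 ≤ s) (hst : s ≤ t)
    (ht : t ≤ hausdorffDist A B) :
    hausdorffEDist (hausdorffInterpolant A B s) (hausdorffInterpolant A B t) ≤
      ENNReal.ofReal (t - s) := by
  refine hausdorffEDist_le_of_mem_edist (fun x hx ↦ ?_) (fun x hx ↦ ?_)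
  · obtain ⟨y, hy, hxy⟩ := hX.exists_mem_hausdorffInterpolant_dist_le hB hs hst ht hx
    exact ⟨y, hy, (edist_le_ofReal (sub_nonneg.2 hst)).2 hxy⟩
  · rw [hausdorffInterpolant_comm] at hx ⊢
    obtain ⟨y, hy, hxy⟩ := hX.exists_mem_hausdorffInterpolant_dist_le hA (sub_nonneg.2 ht)
      (sub_le_sub_left hst _) (by rw [hausdorffDist_comm]; linarith) hx
    rw [sub_sub_sub_cancel_left] at hxy
    exact ⟨y, hy, (edist_le_ofReal (sub_nonneg.2 hst)).2 hxy⟩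

theorem IsGeodesicSpace.hausdorffDist_hausdorffInterpolant [T2Space X] (hX : IsGeodesicSpace X)
    {A B : Set X} (hA : IsCompact A) (hB : IsCompact B) (hAB : hausdorffEDist A B ≠ ⊤)
    {s t : ℝ} (hs : 0 ≤ s) (hst : s ≤ t) (ht : t ≤ hausdorffDist A B) :
    hausdorffDist (hausdorffInterpolant A B s) (hausdorffInterpolant A B t) = t - s := by
  have hends : hausdorffDist (hausdorffInterpolant A B 0)
      (hausdorffInterpolant A B (hausdorffDist A B)) = hausdorffDist A B := by
    rw [hausdorffInterpolant_zero hA.isClosed hAB,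
      hausdorffInterpolant_hausdorffDist hB.isClosed hAB]
  set r := hausdorffDist A B
  set C := hausdorffInterpolant A B
  have hle {a b : ℝ} (ha : 0 ≤ a) (hab : a ≤ b) (hb : b ≤ r) :
      hausdorffEDist (C a) (C b) ≤ ENNReal.ofReal (b - a) :=
    hX.hausdorffEDist_hausdorffInterpolant_le hA hB ha hab hb
  have hfin {a b : ℝ} (ha : 0 ≤ a) (hab : a ≤ b) (hb : b ≤ r) : hausdorffEDist (C a) (C b) ≠ ⊤ :=
    ne_top_of_le_ne_top ENNReal.ofReal_ne_top (hle ha hab hb)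
  have hdist {a b : ℝ} (ha : 0 ≤ a) (hab : a ≤ b) (hb : b ≤ r) :
      hausdorffDist (C a) (C b) ≤ b - a :=
    ENNReal.toReal_le_of_le_ofReal (sub_nonneg.2 hab) (hle ha hab hb)
  have htri₁ :
      hausdorffDist (C 0) (C r) ≤ hausdorffDist (C 0) (C s) + hausdorffDist (C s) (C r) :=
    hausdorffDist_triangle (hfin le_rfl hs (hst.trans ht))
  have htri₂ :
      hausdorffDist (C s) (C r) ≤ hausdorffDist (C s) (C t) + hausdorffDist (C t) (C r) :=
    hausdorffDist_triangle (hfin hs hst ht)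
  linarith [hdist hs hst ht, hdist le_rfl hs (hst.trans ht), hdist (hs.trans hst) ht le_rfl]

end HausdorffInterpolant

theorem hausdorff_geodesic_of_properly_intrinsic_general {X : Type*} [MetricSpace X]
    (hgeo : ∀ x y : X, ∃ γ : ℝ → X, γ 0 = x ∧ γ 1 = y ∧
      ∀ s ∈ Icc (0 : ℝ) 1, ∀ t ∈ Icc (0 : ℝ) 1, dist (γ s) (γ t) = |s - t| * dist x y)
    (A B : Set X) (hA : IsCompact A) (hAne : A.Nonempty)
    (hB : IsCompact B) (hBne : B.Nonempty) :
    ∀ s ∈ Icc (0 : ℝ) (hausdorffDist A B), ∀ t ∈ Icc (0 : ℝ) (hausdorffDist A B),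
      hausdorffDist
        (cthickening s A ∩ cthickening (hausdorffDist A B - s) B)
        (cthickening t A ∩ cthickening (hausdorffDist A B - t) B) = |s - t| := by
  have hX : IsGeodesicSpace X := hgeo
  have hAB : hausdorffEDist A B ≠ ⊤ :=
    hausdorffEDist_ne_top_of_nonempty_of_bounded hAne hBne hA.isBounded hB.isBounded
  intro s hs t ht
  rcases le_total s t with hst | hts
  · rw [abs_sub_comm, abs_of_nonneg (sub_nonneg.2 hst)]
    exact hX.hausdorffDist_hausdorffInterpolant hA hB hAB hs.1 hst ht.2
  · rw [abs_of_nonneg (sub_nonneg.2 hts), hausdorffDist_comm]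
    exact hX.hausdorffDist_hausdorffInterpolant hA hB hAB ht.1 hts hs.2

/-- In a proper metric space with strictly intrinsic metric, the sets
`C_s(A,B) = B_s(A) ∩ B_{r-s}(B)` form a geodesic in the Hausdorff metric from `A` to `B`. -/
theorem hausdorff_geodesic_of_properly_intrinsic {X : Type*} [MetricSpace X] [ProperSpace X]
    (hgeo : ∀ x y : X, ∃ γ : ℝ → X, γ 0 = x ∧ γ 1 = y ∧
      ∀ s ∈ Icc (0 : ℝ) 1, ∀ t ∈ Icc (0 : ℝ) 1, dist (γ s) (γ t) = |s - t| * dist x y)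
    (A B : Set X) (hA : IsCompact A) (hAne : A.Nonempty)
    (hB : IsCompact B) (hBne : B.Nonempty) :
    ∀ s ∈ Icc (0 : ℝ) (hausdorffDist A B), ∀ t ∈ Icc (0 : ℝ) (hausdorffDist A B),
      hausdorffDist
        (cthickening s A ∩ cthickening (hausdorffDist A B - s) B)
        (cthickening t A ∩ cthickening (hausdorffDist A B - t) B) = |s - t| :=
  hausdorff_geodesic_of_properly_intrinsic_general hgeo A B hA hAne hB hBne
end

section
/- Let X be a proper metric space with strictly intrinsic metric, A, B nonempty compact subsets, r = d_H(A,B), s ∈ [0,r]. Then C_s(A,B) = B_s(A) ∩ B_{r−s}(B) is nonempty and compact, and it is in s-position between A and B: d_H(A, C_s(A,B)) = s and d_H(C_s(A,B), B) = r − s. -/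
open Metric Set

/-!
Given `a ∈ A`, compactness of `B` yields `b ∈ B` with `dist a b ≤ d_H(A, B) = r`, and walking
along a linear geodesic from `a` towards `b` gives a point at distance at most `s` from `a` and at
most `r - s` from `b`, hence in `C_s(A, B)`. Thus every point of `A` is `s`-close to `C_s(A, B)`,
and symmetrically every point of `B` is `(r - s)`-close to it, while every point of `C_s(A, B)` is
`s`-close to `A` and `(r - s)`-close to `B` by definition. So `d_H(A, C_s) ≤ s` and
`d_H(C_s, B) ≤ r - s`, and the triangle inequality for `d_H` forces equality in both.
-/

def HasLinearGeodesics (X : Type*) [PseudoMetricSpace X] : Prop :=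
  ∀ x y : X, ∃ γ : ℝ → X, γ 0 = x ∧ γ 1 = y ∧
    ∀ s ∈ Icc (0 : ℝ) 1, ∀ t ∈ Icc (0 : ℝ) 1, dist (γ s) (γ t) = |s - t| * dist x y

section Geodesic

variable {X : Type*} [PseudoMetricSpace X] {A B : Set X} {s t : ℝ}

theorem HasLinearGeodesics.exists_dist_eq (h : HasLinearGeodesics X) {x y : X}
    (hs : 0 ≤ s) (hsxy : s ≤ dist x y) : ∃ z, dist x z = s ∧ dist z y = dist x y - s := by
  rcases hsxy.eq_or_lt with rfl | hlt
  · exact ⟨y, rfl, by simp⟩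
  obtain ⟨γ, hγ0, hγ1, hγ⟩ := h x y
  have hd : 0 < dist x y := hs.trans_lt hlt
  set τ := s / dist x y
  have hτ : τ ∈ Icc (0 : ℝ) 1 := ⟨div_nonneg hs hd.le, (div_le_one hd).2 hlt.le⟩
  have hτs : τ * dist x y = s := div_mul_cancel₀ s hd.ne'
  refine ⟨γ τ, ?_, ?_⟩
  · rw [← hγ0, hγ 0 (left_mem_Icc.2 zero_le_one) τ hτ, zero_sub, abs_neg,
      abs_of_nonneg hτ.1, hτs]
  · rw [← hγ1, hγ τ hτ 1 (right_mem_Icc.2 zero_le_one), abs_of_nonpos (by linarith [hτ.2]),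
      hγ1]
    linarith

theorem HasLinearGeodesics.exists_dist_le_dist_le (h : HasLinearGeodesics X) {x y : X}
    (hs : 0 ≤ s) (ht : 0 ≤ t) (hxy : dist x y ≤ s + t) :
    ∃ z, dist x z ≤ s ∧ dist z y ≤ t := by
  rcases le_or_gt (dist x y) s with hle | hlt
  · exact ⟨y, hle, by rwa [dist_self]⟩
  obtain ⟨z, hxz, hzy⟩ := h.exists_dist_eq hs hlt.le
  exact ⟨z, hxz.le, by linarith⟩

theorem infDist_le_of_mem_cthickening {E : Set X} {x : X} {δ : ℝ} (hδ : 0 ≤ δ)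
    (hx : x ∈ cthickening δ E) : infDist x E ≤ δ :=
  ENNReal.toReal_le_of_le_ofReal hδ hx

theorem IsCompact.exists_dist_le_hausdorffDist {a : X} (hB : IsCompact B)
    (hBne : B.Nonempty) (hAB : hausdorffEDist A B ≠ ⊤) (ha : a ∈ A) :
    ∃ b ∈ B, dist a b ≤ hausdorffDist A B := by
  obtain ⟨b, hb, hab⟩ := hB.exists_infDist_eq_dist hBne a
  exact ⟨b, hb, hab ▸ infDist_le_hausdorffDist_of_mem ha hAB⟩

theorem HasLinearGeodesics.exists_mem_cthickening_inter (h : HasLinearGeodesics X)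
    (hB : IsCompact B) (hBne : B.Nonempty) (hAB : hausdorffEDist A B ≠ ⊤) (hs : 0 ≤ s)
    (ht : 0 ≤ t) (hst : hausdorffDist A B ≤ s + t) {a : X} (ha : a ∈ A) :
    ∃ c ∈ cthickening s A ∩ cthickening t B, dist a c ≤ s := by
  obtain ⟨b, hb, hab⟩ := hB.exists_dist_le_hausdorffDist hBne hAB ha
  obtain ⟨c, hac, hcb⟩ := h.exists_dist_le_dist_le hs ht (hab.trans hst)
  exact ⟨c, ⟨mem_cthickening_of_dist_le c a s A ha (by rwa [dist_comm]),
    mem_cthickening_of_dist_le c b t B hb hcb⟩, hac⟩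

theorem HasLinearGeodesics.hausdorffDist_cthickening_inter_le (h : HasLinearGeodesics X)
    (hB : IsCompact B) (hBne : B.Nonempty) (hAB : hausdorffEDist A B ≠ ⊤) (hs : 0 ≤ s)
    (ht : 0 ≤ t) (hst : hausdorffDist A B ≤ s + t) :
    hausdorffDist A (cthickening s A ∩ cthickening t B) ≤ s := by
  refine hausdorffDist_le_of_infDist hs (fun a ha => ?_)
    (fun c hc => infDist_le_of_mem_cthickening hs hc.1)
  obtain ⟨c, hc, hac⟩ := h.exists_mem_cthickening_inter hB hBne hAB hs ht hst ha
  exact (infDist_le_dist_of_mem hc).trans hac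

end Geodesic

/-- In a proper metric space with strictly intrinsic metric, `C_s(A,B)` is a nonempty compact
set in `s`-position between `A` and `B`. -/
theorem Cs_in_s_position {X : Type*} [MetricSpace X] [ProperSpace X]
    (hgeo : ∀ x y : X, ∃ γ : ℝ → X, γ 0 = x ∧ γ 1 = y ∧
      ∀ s ∈ Icc (0 : ℝ) 1, ∀ t ∈ Icc (0 : ℝ) 1, dist (γ s) (γ t) = |s - t| * dist x y)
    (A B : Set X) (hA : IsCompact A) (hAne : A.Nonempty)
    (hB : IsCompact B) (hBne : B.Nonempty)
    (s : ℝ) (hs : s ∈ Icc (0 : ℝ) (hausdorffDist A B)) :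
    (cthickening s A ∩ cthickening (hausdorffDist A B - s) B).Nonempty ∧
    IsCompact (cthickening s A ∩ cthickening (hausdorffDist A B - s) B) ∧
    hausdorffDist A (cthickening s A ∩ cthickening (hausdorffDist A B - s) B) = s ∧
    hausdorffDist (cthickening s A ∩ cthickening (hausdorffDist A B - s) B) B
      = hausdorffDist A B - s := by
  have h : HasLinearGeodesics X := hgeo
  obtain ⟨hs0, hsr⟩ := hs
  have hrs : 0 ≤ hausdorffDist A B - s := sub_nonneg.2 hsr
  have hAB := hausdorffEDist_ne_top_of_nonempty_of_bounded hAne hBne hA.isBounded hB.isBounded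
  have hBA : hausdorffEDist B A ≠ ⊤ := hausdorffEDist_comm (s := A) ▸ hAB
  obtain ⟨a, ha⟩ := hAne
  obtain ⟨c, hc, -⟩ := h.exists_mem_cthickening_inter hB hBne hAB hs0 hrs (by linarith) ha
  have hC : IsCompact (cthickening s A ∩ cthickening (hausdorffDist A B - s) B) :=
    hA.cthickening.inter_right isClosed_cthickening
  have hAC := h.hausdorffDist_cthickening_inter_le hB hBne hAB hs0 hrs (by linarith)
  have hBC := h.hausdorffDist_cthickening_inter_le hA ⟨a, ha⟩ hBA hrs hs0
    (by rw [hausdorffDist_comm]; linarith)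
  rw [inter_comm, hausdorffDist_comm] at hBC
  have htri := hausdorffDist_triangle (u := B) <|
    hausdorffEDist_ne_top_of_nonempty_of_bounded ⟨a, ha⟩ ⟨c, hc⟩ hA.isBounded hC.isBounded
  exact ⟨⟨c, hc⟩, hC, by linarith, by linarith⟩
end

section
/- Let M = {1,…,n}, n ≥ 3, be a finite metric space with e(M) > 0, and choose 0 < ε ≤ (1/4)·min{s(M), e(M)}. Let X, Y be compact metric spaces with 2·d_GH(M,X) < ε and 2·d_GH(M,Y) < ε, with canonical partitions {X_i} and {Y_i} with respect to M. Then every optimal correspondence R between X and Y decomposes as R = ⊔_{i=1}^n R_i where R_i is a correspondence between X_i and Y_i. -/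
/-!
Since `|d(x, x') - |ij|| < ε` on `X_i × X_j`, likewise on `Y`, and
`dis R = 2 d_GH(X, Y) ≤ 2 (d_GH(M, X) + d_GH(M, Y)) < 2ε`, the relation on `M` "some point of
`X_i` is `R`-related to some point of `Y_j`" distorts the distances of `M` by less than
`4ε ≤ min {s(M), e(M)}`. Such a relation only relates `i` to `i`: were `i` related to `j ≠ i`,
then for every `k ≠ i`, related to some `l`, `s(M)` gives `l ≠ j` and `e(M)` gives
`{i, k} = {j, l}`, so `k = j`; thus `M = {i, j}`, against `|M| ≥ 3`.
-/

open GromovHausdorff Set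

/-- `s(M)`: the smallest nonzero distance of `M`. -/
noncomputable def sepM (M : Type*) [MetricSpace M] : ℝ :=
  sInf {d : ℝ | ∃ x y : M, x ≠ y ∧ d = dist x y}

/-- `e(M)`: the least gap between distinct nonzero distances of `M`. -/
noncomputable def excM (M : Type*) [MetricSpace M] : ℝ :=
  sInf {d : ℝ | ∃ x y z w : M, x ≠ y ∧ z ≠ w ∧ ({x, y} : Set M) ≠ {z, w} ∧
    d = |dist x y - dist z w|}

theorem sepM_le_dist {M : Type*} [MetricSpace M] {i j : M} (h : i ≠ j) : sepM M ≤ dist i j :=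
  csInf_le ⟨0, fun _ ⟨_, _, _, hd⟩ => hd ▸ dist_nonneg⟩ ⟨i, j, h, rfl⟩

theorem excM_le_abs_dist_sub_dist {M : Type*} [MetricSpace M] {i j k l : M} (hij : i ≠ j)
    (hkl : k ≠ l) (h : ({i, j} : Set M) ≠ {k, l}) : excM M ≤ |dist i j - dist k l| :=
  csInf_le ⟨0, fun _ ⟨_, _, _, _, _, _, _, hd⟩ => hd ▸ abs_nonneg _⟩
    ⟨i, j, k, l, hij, hkl, h, rfl⟩

theorem eq_of_rel_of_abs_dist_sub_dist_lt {M : Type*} [MetricSpace M] [Fintype M]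
    (hn : 3 ≤ Fintype.card M) {δ : ℝ} (hs : δ ≤ sepM M) (he : δ ≤ excM M)
    {T : M → M → Prop} (hT : ∀ k, ∃ l, T k l)
    (hdis : ∀ i j k l, T i j → T k l → |dist i k - dist j l| < δ) {i j : M} (hij : T i j) :
    i = j := by
  classical
  by_contra hne
  have hcover : ∀ k, k ≠ i → k = j := by
    intro k hki
    obtain ⟨l, hkl⟩ := hT k
    have hlt := hdis i j k l hij hkl
    have hjl : j ≠ l := by
      rintro rfl
      rw [dist_self, sub_zero, abs_of_nonneg dist_nonneg] at hlt
      linarith [sepM_le_dist (Ne.symm hki)]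
    have hpair : ({i, k} : Set M) = {j, l} := by
      by_contra h
      linarith [excM_le_abs_dist_sub_dist (Ne.symm hki) hjl h]
    have hi : i ∈ ({j, l} : Set M) := hpair ▸ mem_insert i {k}
    have hk : k ∈ ({j, l} : Set M) := hpair ▸ mem_insert_of_mem i rfl
    simp only [mem_insert_iff, mem_singleton_iff] at hi hk
    grind
  have hcard : Fintype.card M ≤ 2 :=
    calc Fintype.card M = (Finset.univ : Finset M).card := Finset.card_univ.symm
      _ ≤ ({i, j} : Finset M).card := Finset.card_le_card fun k _ => by
          by_cases hki : k = i
          · simp [hki]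
          · simp [hcover k hki]
      _ ≤ 2 := Finset.card_le_two
  omega

theorem abs_dist_sub_le_distortion {X Y : Type*} [MetricSpace X] [MetricSpace Y]
    [BoundedSpace X] [BoundedSpace Y] {R : Set (X × Y)} {p q : X × Y} (hp : p ∈ R) (hq : q ∈ R) :
    |dist p.1 q.1 - dist p.2 q.2| ≤ distortion R := by
  refine le_csSup ⟨Metric.diam (univ : Set X) + Metric.diam (univ : Set Y), ?_⟩
    ⟨p, hp, q, hq, rfl⟩
  rintro _ ⟨p, -, q, -, rfl⟩
  have hX := Metric.dist_le_diam_of_mem (Bornology.isBounded_univ.2 ‹_›) (mem_univ p.1) (mem_univ q.1)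
  have hY := Metric.dist_le_diam_of_mem (Bornology.isBounded_univ.2 ‹_›) (mem_univ p.2) (mem_univ q.2)
  rw [abs_sub_le_iff]
  constructor <;> linarith [dist_nonneg (x := p.1) (y := q.1), dist_nonneg (x := p.2) (y := q.2)]

theorem ghDist_le_ghDist_add_ghDist (M X Y : Type*) [MetricSpace M] [CompactSpace M] [Nonempty M]
    [MetricSpace X] [CompactSpace X] [Nonempty X] [MetricSpace Y] [CompactSpace Y] [Nonempty Y] :
    ghDist X Y ≤ ghDist M X + ghDist M Y := by
  unfold ghDist
  rw [dist_comm (toGHSpace M)]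
  exact dist_triangle _ _ _

section Partition

variable {M X Y : Type*} [MetricSpace M] [MetricSpace X] [MetricSpace Y] {ε : ℝ}
  {P : M → Set X} {Q : M → Set Y} {R : Set (X × Y)}

theorem abs_dist_sub_dist_lt_of_mem
    (hPd : ∀ i j, ∀ x ∈ P i, ∀ x' ∈ P j, |dist x x' - dist i j| < ε)
    (hQd : ∀ i j, ∀ y ∈ Q i, ∀ y' ∈ Q j, |dist y y' - dist i j| < ε)
    (hdis : ∀ p ∈ R, ∀ q ∈ R, |dist p.1 q.1 - dist p.2 q.2| < 2 * ε)
    {i j k l : M} {x x' : X} {y y' : Y} (hxy : (x, y) ∈ R) (hxy' : (x', y') ∈ R)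
    (hx : x ∈ P i) (hy : y ∈ Q j) (hx' : x' ∈ P k) (hy' : y' ∈ Q l) :
    |dist i k - dist j l| < 4 * ε := by
  have hX := hPd i k x hx x' hx'
  have hY := hQd j l y hy y' hy'
  have hR := hdis _ hxy _ hxy'
  rw [abs_sub_lt_iff] at hX hY hR ⊢
  constructor <;> linarith

theorem part_index_eq_of_mem [Fintype M] (hn : 3 ≤ Fintype.card M)
    (hs : 4 * ε ≤ sepM M) (he : 4 * ε ≤ excM M)
    (hPne : ∀ i, (P i).Nonempty) (hQcover : ∀ y, ∃ j, y ∈ Q j)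
    (hPd : ∀ i j, ∀ x ∈ P i, ∀ x' ∈ P j, |dist x x' - dist i j| < ε)
    (hQd : ∀ i j, ∀ y ∈ Q i, ∀ y' ∈ Q j, |dist y y' - dist i j| < ε)
    (hRX : ∀ x, ∃ y, (x, y) ∈ R)
    (hdis : ∀ p ∈ R, ∀ q ∈ R, |dist p.1 q.1 - dist p.2 q.2| < 2 * ε)
    {i j : M} {x : X} {y : Y} (hxy : (x, y) ∈ R) (hx : x ∈ P i) (hy : y ∈ Q j) : i = j := by
  refine eq_of_rel_of_abs_dist_sub_dist_lt (T := fun i j => ∃ x ∈ P i, ∃ y ∈ Q j, (x, y) ∈ R)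
    hn hs he (fun k => ?_) ?_ ⟨x, hx, y, hy, hxy⟩
  · obtain ⟨x, hx⟩ := hPne k
    obtain ⟨y, hy⟩ := hRX x
    obtain ⟨l, hl⟩ := hQcover y
    exact ⟨l, x, hx, y, hl, hy⟩
  · rintro i j k l ⟨x, hx, y, hy, hxy⟩ ⟨x', hx', y', hy', hxy'⟩
    exact abs_dist_sub_dist_lt_of_mem hPd hQd hdis hxy hxy' hx hy hx' hy'

end Partition

theorem optimal_correspondence_decomposes_general (M : Type*) [MetricSpace M] [Fintype M] [Nonempty M]
    (hn : 3 ≤ Fintype.card M)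
    (X Y : Type*) [MetricSpace X] [CompactSpace X] [Nonempty X]
    [MetricSpace Y] [CompactSpace Y] [Nonempty Y]
    (ε : ℝ) (hε : ε ≤ (1 / 4) * min (sepM M) (excM M))
    (hX : 2 * GromovHausdorff.ghDist M X < ε) (hY : 2 * GromovHausdorff.ghDist M Y < ε)
    (P : M → Set X) (Q : M → Set Y)
    (hP : (∀ i, (P i).Nonempty) ∧ (Pairwise fun i j => Disjoint (P i) (P j)) ∧
      (⋃ i, P i) = Set.univ ∧ (∀ i, Metric.diam (P i) < ε) ∧
      (∀ i j, ∀ x ∈ P i, ∀ x' ∈ P j, |dist x x' - dist i j| < ε))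
    (hQ : (∀ i, (Q i).Nonempty) ∧ (Pairwise fun i j => Disjoint (Q i) (Q j)) ∧
      (⋃ i, Q i) = Set.univ ∧ (∀ i, Metric.diam (Q i) < ε) ∧
      (∀ i j, ∀ y ∈ Q i, ∀ y' ∈ Q j, |dist y y' - dist i j| < ε))
    (R : Set (X × Y)) (hR : IsCorrespondence R)
    (hopt : GromovHausdorff.ghDist X Y = distortion R / 2) :
    R = ⋃ i, R ∩ (P i ×ˢ Q i) ∧
    ∀ i, (∀ x ∈ P i, ∃ y ∈ Q i, (x, y) ∈ R) ∧ (∀ y ∈ Q i, ∃ x ∈ P i, (x, y) ∈ R) := by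
  obtain ⟨hPne, -, hPcover, -, hPd⟩ := hP
  obtain ⟨-, -, hQcover, -, hQd⟩ := hQ
  rw [iUnion_eq_univ_iff] at hPcover hQcover
  have hdis : ∀ p ∈ R, ∀ q ∈ R, |dist p.1 q.1 - dist p.2 q.2| < 2 * ε := fun p hp q hq =>
    calc |dist p.1 q.1 - dist p.2 q.2| ≤ distortion R := abs_dist_sub_le_distortion hp hq
      _ = 2 * ghDist X Y := by rw [hopt]; ring
      _ ≤ 2 * (ghDist M X + ghDist M Y) := by gcongr; exact ghDist_le_ghDist_add_ghDist M X Y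
      _ < 2 * ε := by linarith
  have hdiag {i j : M} {x : X} {y : Y} : (x, y) ∈ R → x ∈ P i → y ∈ Q j → i = j :=
    part_index_eq_of_mem hn (by linarith [min_le_left (sepM M) (excM M)])
      (by linarith [min_le_right (sepM M) (excM M)]) hPne hQcover hPd hQd hR.1 hdis
  refine ⟨?_, fun i => ⟨fun x hx => ?_, fun y hy => ?_⟩⟩
  · refine Subset.antisymm (fun ⟨x, y⟩ hxy => ?_) (iUnion_subset fun i => inter_subset_left)
    obtain ⟨i, hx⟩ := hPcover x
    obtain ⟨j, hy⟩ := hQcover y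
    exact mem_iUnion.2 ⟨i, hxy, hx, hdiag hxy hx hy ▸ hy⟩
  · obtain ⟨y, hxy⟩ := hR.1 x
    obtain ⟨j, hy⟩ := hQcover y
    exact ⟨y, hdiag hxy hx hy ▸ hy, hxy⟩
  · obtain ⟨x, hxy⟩ := hR.2 y
    obtain ⟨j, hx⟩ := hPcover x
    exact ⟨x, (hdiag hxy hx hy).symm ▸ hx, hxy⟩

/-- Every optimal correspondence between `X` and `Y` decomposes along the canonical
partitions with respect to `M`. -/
theorem optimal_correspondence_decomposes (M : Type*) [MetricSpace M] [Fintype M] [Nonempty M]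
    (hn : 3 ≤ Fintype.card M) (he : 0 < excM M)
    (X Y : Type*) [MetricSpace X] [CompactSpace X] [Nonempty X]
    [MetricSpace Y] [CompactSpace Y] [Nonempty Y]
    (ε : ℝ) (hε0 : 0 < ε) (hε : ε ≤ (1 / 4) * min (sepM M) (excM M))
    (hX : 2 * GromovHausdorff.ghDist M X < ε) (hY : 2 * GromovHausdorff.ghDist M Y < ε)
    (P : M → Set X) (Q : M → Set Y)
    (hP : (∀ i, (P i).Nonempty) ∧ (Pairwise fun i j => Disjoint (P i) (P j)) ∧
      (⋃ i, P i) = Set.univ ∧ (∀ i, Metric.diam (P i) < ε) ∧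
      (∀ i j, ∀ x ∈ P i, ∀ x' ∈ P j, |dist x x' - dist i j| < ε))
    (hQ : (∀ i, (Q i).Nonempty) ∧ (Pairwise fun i j => Disjoint (Q i) (Q j)) ∧
      (⋃ i, Q i) = Set.univ ∧ (∀ i, Metric.diam (Q i) < ε) ∧
      (∀ i j, ∀ y ∈ Q i, ∀ y' ∈ Q j, |dist y y' - dist i j| < ε))
    (R : Set (X × Y)) (hR : IsCorrespondence R)
    (hopt : GromovHausdorff.ghDist X Y = distortion R / 2) :
    R = ⋃ i, R ∩ (P i ×ˢ Q i) ∧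
    ∀ i, (∀ x ∈ P i, ∃ y ∈ Q i, (x, y) ∈ R) ∧ (∀ y ∈ Q i, ∃ x ∈ P i, (x, y) ∈ R) :=
  optimal_correspondence_decomposes_general M hn X Y ε hε hX hY P Q hP hQ R hR hopt
end
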